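/- Suppose (a(n)) is a sequence of nonnegative reals which is subadditive and almost superadditive in the sense that there is a constant τ₀ ≥ 0 with a(n) + a(k) ≤ a(n+k) + 2τ₀ for all n,k. Then ℓ := lim a(n)/n exists and |a(n) − nℓ| ≤ 2τ₀ for all n. -/
import Mathlib


open Filter Topology

/-- a nonnegative sequence that is subadditive and almost superadditive
(up to `2τ₀`) has a limit `ℓ = lim a(n)/n`, and `|a(n) − nℓ| ≤ 2τ₀` for all `n`. -/
theorem almost_additive_sequence (a : ℕ → ℝ) (τ₀ : ℝ)
    (hnonneg : ∀ n, 0 ≤ a n) (hτ₀ : 0 ≤ τ₀)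
    (hsub : ∀ n k, a (n + k) ≤ a n + a k)
    (hsuper : ∀ n k, a n + a k ≤ a (n + k) + 2 * τ₀) :
    ∃ ℓ : ℝ, Tendsto (fun n : ℕ => a n / n) atTop (𝓝 ℓ) ∧
      ∀ n : ℕ, |a n - n * ℓ| ≤ 2 * τ₀ := by
  have hA : Subadditive a := fun m n => hsub m n
  have hB : Subadditive (fun n => 2 * τ₀ - a n) := by
    intro m n
    have := hsuper m n
    simp only
    linarith
  have hbddA : BddBelow (Set.range fun n : ℕ => a n / n) := by
    refine ⟨0, ?_⟩
    rintro x ⟨n, rfl⟩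
    exact div_nonneg (hnonneg n) (Nat.cast_nonneg n)
  have ha1 : ∀ n : ℕ, a n ≤ n * a 1 + a 0 := by
    intro n
    have := hA.apply_mul_add_le n 1 0
    simpa using this
  have hbddB : BddBelow (Set.range fun n : ℕ => (2 * τ₀ - a n) / n) := by
    refine ⟨-(a 1 + a 0), ?_⟩
    rintro x ⟨n, rfl⟩
    rcases Nat.eq_zero_or_pos n with rfl | hn
    · simp only [Nat.cast_zero, div_zero]; nlinarith [hnonneg 0, hnonneg 1]
    · have hn' : (0:ℝ) < n := by exact_mod_cast hn
      have h1 : (1:ℝ) ≤ n := by exact_mod_cast hn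
      rw [le_div_iff₀ hn']
      have := ha1 n
      have h2 : a 0 ≤ n * a 0 := le_mul_of_one_le_left (hnonneg 0) h1
      nlinarith [hnonneg n, hnonneg 0, hnonneg 1]
  set ℓ := hA.lim with hℓ
  have htendA : Tendsto (fun n : ℕ => a n / n) atTop (𝓝 ℓ) := hA.tendsto_lim hbddA
  have htendB : Tendsto (fun n : ℕ => (2 * τ₀ - a n) / n) atTop (𝓝 hB.lim) :=
    hB.tendsto_lim hbddB
  -- identify hB.lim = -ℓ
  have htendB' : Tendsto (fun n : ℕ => (2 * τ₀ - a n) / n) atTop (𝓝 (-ℓ)) := by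
    have hc : Tendsto (fun n : ℕ => (2 * τ₀) / n) atTop (𝓝 0) :=
      tendsto_const_nhds.div_atTop tendsto_natCast_atTop_atTop
    have := hc.sub htendA
    simpa [sub_div] using this
  have hBlim : hB.lim = -ℓ := tendsto_nhds_unique htendB htendB'
  refine ⟨ℓ, htendA, fun n => ?_⟩
  rcases Nat.eq_zero_or_pos n with rfl | hn
  · have := hsuper 0 0
    have h0 : a 0 ≤ 2 * τ₀ := by linarith
    simp only [Nat.cast_zero, zero_mul, sub_zero]
    rw [abs_of_nonneg (hnonneg 0)]
    exact h0
  · have hn' : (0:ℝ) < n := by exact_mod_cast hn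
    have hle1 : ℓ ≤ a n / n := hA.lim_le_div hbddA hn.ne'
    have hle2 : -ℓ ≤ (2 * τ₀ - a n) / n := hBlim ▸ hB.lim_le_div hbddB hn.ne'
    rw [le_div_iff₀ hn'] at hle1 hle2
    rw [abs_le]
    constructor
    · nlinarith
    · nlinarith
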